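/- arXiv:1509.08614 — 7 statements merged into one kernel-verified Lean document; each statement's English description precedes it below -/
import Mathlib

section
/- The inverse Cauchy transform of the semicircle distribution with mean m and variance σ², given by G⁻¹(z) = m + σ²z + 1/z, is a bijection from the open lower half-plane ℂ⁻ onto the set ℂ⁺ ∪ (m−2σ, m+2σ) ∪ ℂ⁻. -/
open Complex Set

/-!
The map `F z = m + v z + 1/z` (with `v = σ²`) satisfies `F z = F w` iff `w = z` or `w = 1/(v z)`, and
the involution `z ↦ 1/(v z)` swaps the two open half-planes. Since `v z² - (w - m) z + 1` always has a
root, every `w` has a preimage, and exactly one of the two preimages `z`, `1/(v z)` lies in `ℂ⁻` unless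
they are real, and on the real axis `|F x - m| = |σ² x + 1/x| ≥ 2σ`, so only real values outside
`(m - 2σ, m + 2σ)` have real preimages. Conversely `Im F z = Im z · (σ² - 1/|z|²)`, so for `z ∈ ℂ⁻` the value
`F z` is real only on the circle `|z| = 1/σ`, where `F z = m + 2σ² Re z` with `|Re z| < 1/σ`.
-/

/-- The inverse Cauchy transform `G⁻¹` of the semicircle law with mean `m` and variance `v`. -/
noncomputable def invCauchySemicircle (m v : ℝ) (z : ℂ) : ℂ := m + v * z + 1 / z

section

variable (m v : ℝ)

lemma im_invCauchySemicircle (z : ℂ) :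
    (invCauchySemicircle m v z).im = z.im * (v - (normSq z)⁻¹) := by
  simp only [invCauchySemicircle, add_im, ofReal_im, mul_im, ofReal_re, one_div, inv_im]
  ring

lemma re_invCauchySemicircle (z : ℂ) :
    (invCauchySemicircle m v z).re = m + v * z.re + z.re / normSq z := by
  simp [invCauchySemicircle, inv_re]

lemma invCauchySemicircle_ofReal (x : ℝ) :
    invCauchySemicircle m v x = ↑(m + v * x + x⁻¹) := by
  simp [invCauchySemicircle]

lemma invCauchySemicircle_inv_ofReal_mul (hv : v ≠ 0) {z : ℂ} (hz : z ≠ 0) :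
    invCauchySemicircle m v ((v : ℂ) * z)⁻¹ = invCauchySemicircle m v z := by
  have hv' : (v : ℂ) ≠ 0 := ofReal_ne_zero.mpr hv
  simp only [invCauchySemicircle]
  field_simp
  ring

lemma eq_or_mul_mul_eq_one_of_invCauchySemicircle_eq {z w : ℂ} (hz : z ≠ 0) (hw : w ≠ 0)
    (h : invCauchySemicircle m v z = invCauchySemicircle m v w) : z = w ∨ v * z * w = 1 := by
  have hfactor : (z - w) * (v * z * w - 1) = 0 := by
    simp only [invCauchySemicircle] at h
    field_simp at h
    linear_combination h
  rcases mul_eq_zero.mp hfactor with h | h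
  · exact .inl (sub_eq_zero.mp h)
  · exact .inr (sub_eq_zero.mp h)

/-- A root of `v z² - (w - m) z + 1` is a preimage of `w`. -/
lemma exists_invCauchySemicircle_eq (hv : v ≠ 0) (w : ℂ) :
    ∃ z, z ≠ 0 ∧ invCauchySemicircle m v z = w := by
  have hv' : (v : ℂ) ≠ 0 := ofReal_ne_zero.mpr hv
  obtain ⟨z, hz⟩ := exists_quadratic_eq_zero hv' (IsAlgClosed.exists_eq_mul_self
    (discrim (v : ℂ) (-(w - m)) 1))
  have hz0 : z ≠ 0 := by rintro rfl; simp at hz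
  refine ⟨z, hz0, ?_⟩
  simp only [invCauchySemicircle]
  field_simp
  linear_combination hz

end

lemma inv_ofReal_mul_im_neg_iff {v : ℝ} (hv : 0 < v) (z : ℂ) :
    ((v : ℂ) * z)⁻¹.im < 0 ↔ 0 < z.im := by
  rcases eq_or_ne z 0 with rfl | hz
  · simp
  have hN : 0 < normSq ((v : ℂ) * z) := normSq_pos.mpr (mul_ne_zero (ofReal_ne_zero.mpr hv.ne') hz)
  rw [inv_im, div_lt_iff₀ hN, zero_mul, neg_lt_zero, im_ofReal_mul]
  exact mul_pos_iff_of_pos_left hv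

lemma two_mul_le_abs_sq_mul_add_inv (σ : ℝ) {x : ℝ} (hx : x ≠ 0) :
    2 * σ ≤ |σ ^ 2 * x + x⁻¹| := by
  have hx' : 0 < |x| := abs_pos.mpr hx
  have hmul : |σ ^ 2 * x + x⁻¹| * |x| = σ ^ 2 * |x| ^ 2 + 1 := by
    rw [← abs_mul, sq_abs, show (σ ^ 2 * x + x⁻¹) * x = σ ^ 2 * x ^ 2 + 1 by field_simp]
    exact abs_of_nonneg (by positivity)
  refine le_of_mul_le_mul_right ?_ hx'
  rw [hmul]
  nlinarith [sq_nonneg (σ * |x| - 1)]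

lemma halfPlanes_union_Ioo_eq (a b : ℝ) :
    {z : ℂ | 0 < z.im} ∪ {z : ℂ | z.im = 0 ∧ a < z.re ∧ z.re < b} ∪ {z : ℂ | z.im < 0} =
      {w : ℂ | w.im = 0 → a < w.re ∧ w.re < b} := by
  ext w
  simp only [mem_union, mem_ofPred_eq]
  constructor
  · rintro ((h | h) | h) h0
    · exact absurd h0 h.ne'
    · exact h.2
    · exact absurd h0 h.ne
  · intro h
    rcases lt_trichotomy w.im 0 with h' | h' | h'
    · exact .inr h'
    · exact .inl (.inr ⟨h', h h'⟩)
    · exact .inl (.inl h')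

lemma ne_zero_of_im_neg {z : ℂ} (hz : z.im < 0) : z ≠ 0 := by
  rintro rfl
  simp at hz

lemma mapsTo_invCauchySemicircle (m : ℝ) {σ : ℝ} (hσ : 0 < σ) :
    MapsTo (invCauchySemicircle m (σ ^ 2)) {z | z.im < 0}
      {w | w.im = 0 → m - 2 * σ < w.re ∧ w.re < m + 2 * σ} := by
  intro z (hz : z.im < 0) him
  have hN0 : normSq z ≠ 0 := (normSq_pos.mpr (ne_zero_of_im_neg hz)).ne'
  rw [im_invCauchySemicircle, mul_eq_zero, sub_eq_zero] at him
  have hN : σ ^ 2 * normSq z = 1 := by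
    rcases him with h | h
    · exact absurd h hz.ne
    · rw [h, inv_mul_cancel₀ hN0]
  have hre : (invCauchySemicircle m (σ ^ 2) z).re = m + 2 * σ ^ 2 * z.re := by
    rw [re_invCauchySemicircle, div_eq_mul_inv, ← eq_inv_of_mul_eq_one_left hN]
    ring
  have hx : (σ * z.re) ^ 2 < 1 := by
    rw [← hN, normSq_apply]
    nlinarith [mul_pos (pow_pos hσ 2) (mul_pos_of_neg_of_neg hz hz)]
  obtain ⟨hlo, hhi⟩ := abs_lt.mp ((sq_lt_one_iff_abs_lt_one _).mp hx)
  rw [hre]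
  constructor <;> nlinarith

lemma injOn_invCauchySemicircle (m : ℝ) {v : ℝ} (hv : 0 < v) :
    InjOn (invCauchySemicircle m v) {z | z.im < 0} := by
  intro z (hz : z.im < 0) w (hw : w.im < 0) h
  refine (eq_or_mul_mul_eq_one_of_invCauchySemicircle_eq m v (ne_zero_of_im_neg hz)
    (ne_zero_of_im_neg hw) h).resolve_right fun hzw => ?_
  rw [eq_inv_of_mul_eq_one_right hzw, inv_ofReal_mul_im_neg_iff hv] at hw
  exact hz.not_gt hw

lemma surjOn_invCauchySemicircle (m : ℝ) {σ : ℝ} (hσ : 0 < σ) :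
    SurjOn (invCauchySemicircle m (σ ^ 2)) {z | z.im < 0}
      {w | w.im = 0 → m - 2 * σ < w.re ∧ w.re < m + 2 * σ} := by
  intro w (hw : w.im = 0 → _)
  have hv : 0 < σ ^ 2 := by positivity
  obtain ⟨z, hz0, rfl⟩ := exists_invCauchySemicircle_eq m _ hv.ne' w
  rcases lt_trichotomy z.im 0 with hneg | hreal | hpos
  · exact ⟨z, hneg, rfl⟩
  · have hz : z = (z.re : ℂ) := Complex.ext rfl (by simp [hreal])
    have hx0 : z.re ≠ 0 := fun h => hz0 (by rw [hz, h, ofReal_zero])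
    rw [hz, invCauchySemicircle_ofReal, ofReal_im, ofReal_re] at hw
    obtain ⟨hlo, hhi⟩ := hw rfl
    have := two_mul_le_abs_sq_mul_add_inv σ hx0
    rw [le_abs] at this
    rcases this with h | h <;> linarith
  · exact ⟨_, (inv_ofReal_mul_im_neg_iff hv z).mpr hpos,
      invCauchySemicircle_inv_ofReal_mul m _ hv.ne' hz0⟩

/-- The inverse Cauchy transform of the semicircle distribution `W(m, σ²)`,
`z ↦ m + σ² z + 1/z`, is a bijection from the open lower half-plane onto
`ℂ⁺ ∪ (m - 2σ, m + 2σ) ∪ ℂ⁻`. -/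
theorem semicircle_inverse_cauchy_bijOn (m σ : ℝ) (hσ : 0 < σ) :
    Set.BijOn (fun z : ℂ => (m : ℂ) + (σ ^ 2 : ℝ) * z + 1 / z)
      {z : ℂ | z.im < 0}
      ({z : ℂ | 0 < z.im} ∪
        {z : ℂ | z.im = 0 ∧ m - 2 * σ < z.re ∧ z.re < m + 2 * σ} ∪
        {z : ℂ | z.im < 0}) := by
  rw [halfPlanes_union_Ioo_eq]
  exact ⟨mapsTo_invCauchySemicircle m hσ, injOn_invCauchySemicircle m (by positivity),
    surjOn_invCauchySemicircle m hσ⟩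
end

section
/- The inverse Cauchy transform of the free Poisson distribution MP(p,θ), given by G⁻¹(z) = 1/z + pθ/(1−θz), is a bijection from the open lower half-plane ℂ⁻ onto ℂ⁺ ∪ (θ(√p−1)², θ(√p+1)²) ∪ ℂ⁻. -/
/-!
Substituting `u = 1 / z - θ`, which maps `ℂ⁻` bijectively onto `ℂ⁺`, turns the map into the
shifted Joukowski map `u ↦ u + c² / u + (p + 1)θ` with `c = √p θ`. For `J u = u + c² / u` one has
`J u = J v ↔ u = v ∨ u v = c²`, and `u ↦ c² / u` exchanges `ℂ⁺` and `ℂ⁻`; hence `J` is injective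
on `ℂ⁺`. Every `w` is `J u` for a root `u` of `u² - w u + c²`; as `J (c² / u) = J u`, the value `w`
is attained on `ℂ⁺` unless `u` is real, and then `|w| ≥ 2c`. Conversely a real value `J u` with
`u ∈ ℂ⁺` forces `|u| = c`, so `J u = 2 Re u ∈ (-2c, 2c)`.
-/

open Complex Set Real

lemma im_ofReal_div (a : ℝ) (u : ℂ) : ((a : ℂ) / u).im = a * -u.im / normSq u := by
  simp [div_im]
  ring

lemma im_ofReal_div_pos_iff {a : ℝ} (ha : 0 < a) {u : ℂ} :
    0 < ((a : ℂ) / u).im ↔ u.im < 0 := by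
  rcases eq_or_ne u 0 with rfl | hu
  · simp
  rw [im_ofReal_div, div_pos_iff_of_pos_right (normSq_pos.2 hu), mul_pos_iff_of_pos_left ha,
    neg_pos]

lemma im_ofReal_div_neg_iff {a : ℝ} (ha : 0 < a) {u : ℂ} :
    ((a : ℂ) / u).im < 0 ↔ 0 < u.im := by
  simpa [div_neg] using im_ofReal_div_pos_iff ha (u := -u)

lemma two_mul_abs_le_abs_add_sq_div (c : ℝ) {x : ℝ} (hx : x ≠ 0) :
    2 * |c| ≤ |x + c ^ 2 / x| := by
  rw [← abs_two, ← abs_mul, ← sq_le_sq]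
  have : (x + c ^ 2 / x) ^ 2 = (2 * c) ^ 2 + (x - c ^ 2 / x) ^ 2 := by
    field_simp
    ring
  rw [this]
  exact le_add_of_nonneg_right (sq_nonneg _)

noncomputable def joukowski (c : ℝ) (u : ℂ) : ℂ := u + (c : ℂ) ^ 2 / u

namespace joukowski

variable {c : ℝ} {u v : ℂ}

lemma sq_div (hc : c ≠ 0) (hu : u ≠ 0) : joukowski c ((c : ℂ) ^ 2 / u) = joukowski c u := by
  have : (c : ℂ) ≠ 0 := ofReal_ne_zero.2 hc
  simp only [joukowski]
  field_simp
  ring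

lemma im_eq (c : ℝ) (u : ℂ) : (joukowski c u).im = u.im * (1 - c ^ 2 / normSq u) := by
  rw [joukowski, add_im, ← ofReal_pow, im_ofReal_div]
  ring

lemma eq_two_mul_re_of_normSq_eq (h : normSq u = c ^ 2) : joukowski c u = (2 * u.re : ℝ) := by
  rcases eq_or_ne u 0 with rfl | hu
  · simp [joukowski]
  rw [joukowski, ← ofReal_pow, ← h, ← mul_conj, mul_div_cancel_left₀ _ hu, add_conj]

lemma eq_iff (hu : u ≠ 0) (hv : v ≠ 0) :
    joukowski c u = joukowski c v ↔ u = v ∨ u * v = (c : ℂ) ^ 2 := by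
  have : joukowski c u - joukowski c v = (u - v) * (u * v - (c : ℂ) ^ 2) / (u * v) := by
    simp only [joukowski]
    field_simp
    ring
  simp [← sub_eq_zero (a := joukowski c u), this, hu, hv, sub_eq_zero]

lemma ofReal_eq (c x : ℝ) : joukowski c x = ((x + c ^ 2 / x : ℝ) : ℂ) := by
  push_cast
  rfl

lemma exists_eq (hc : c ≠ 0) (w : ℂ) : ∃ u ≠ 0, joukowski c u = w := by
  obtain ⟨u, hu⟩ := exists_quadratic_eq_zero (one_ne_zero) (IsAlgClosed.exists_eq_mul_self
    (discrim 1 (-w) ((c : ℂ) ^ 2)))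
  have hu0 : u ≠ 0 := by
    rintro rfl
    simp [hc] at hu
  refine ⟨u, hu0, ?_⟩
  simp only [joukowski]
  field_simp
  linear_combination hu

lemma abs_re_lt_of_im_eq_zero (hu : 0 < u.im) (h : (joukowski c u).im = 0) :
    |(joukowski c u).re| < 2 * |c| := by
  have hN : normSq u = c ^ 2 := by
    have hN0 : normSq u ≠ 0 := by
      rw [Ne, normSq_eq_zero]
      rintro rfl
      simp at hu
    rw [im_eq, mul_eq_zero, sub_eq_zero, eq_div_iff hN0, one_mul] at h
    exact h.resolve_left hu.ne'
  have hre : u.re ^ 2 < c ^ 2 := by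
    rw [← hN, normSq_apply]
    nlinarith
  rw [eq_two_mul_re_of_normSq_eq hN, ofReal_re, abs_mul, abs_two]
  have := sq_lt_sq.1 hre
  linarith

end joukowski

def twoSlitPlane (a b : ℝ) : Set ℂ :=
  {w | 0 < w.im} ∪ {w | w.im = 0 ∧ a < w.re ∧ w.re < b} ∪ {w | w.im < 0}

lemma mem_twoSlitPlane_iff {a b : ℝ} {w : ℂ} :
    w ∈ twoSlitPlane a b ↔ (w.im = 0 → a < w.re ∧ w.re < b) := by
  rcases lt_trichotomy w.im 0 with h | h | h
  · simp [twoSlitPlane, h, h.ne]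
  · simp [twoSlitPlane, h]
  · simp [twoSlitPlane, h, h.ne']

section

variable {c : ℝ} (m : ℝ)

lemma joukowski_add_const_mapsTo (hc : 0 < c) :
    MapsTo (fun u => joukowski c u + m) {u | 0 < u.im} (twoSlitPlane (m - 2 * c) (m + 2 * c)) := by
  intro u hu
  refine mem_twoSlitPlane_iff.2 fun h => ?_
  have hre := joukowski.abs_re_lt_of_im_eq_zero hu (by simpa using h)
  rw [abs_of_pos hc, abs_lt] at hre
  simp only [add_re, ofReal_re]
  constructor <;> linarith

lemma joukowski_add_const_injOn (hc : c ≠ 0) :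
    InjOn (fun u => joukowski c u + m) {u | 0 < u.im} := by
  intro u hu v hv huv
  have hu0 : u ≠ 0 := by rintro rfl; simp at hu
  have hv0 : v ≠ 0 := by rintro rfl; simp at hv
  refine ((joukowski.eq_iff hu0 hv0).1 (add_right_cancel huv)).resolve_right fun h => ?_
  have hv' : v = ((c ^ 2 : ℝ) : ℂ) / u := by
    rw [eq_div_iff hu0, mul_comm, h, ofReal_pow]
  have := (im_ofReal_div_neg_iff (a := c ^ 2) (sq_pos_of_ne_zero hc)).2 hu
  rw [← hv'] at this
  exact hv.not_gt this

lemma joukowski_add_const_surjOn (hc : 0 < c) :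
    SurjOn (fun u => joukowski c u + m) {u | 0 < u.im} (twoSlitPlane (m - 2 * c) (m + 2 * c)) := by
  intro w hw
  obtain ⟨u, hu0, hu⟩ := joukowski.exists_eq hc.ne' (w - m)
  rcases lt_trichotomy u.im 0 with h | h | h
  · refine ⟨(c : ℂ) ^ 2 / u, ?_, ?_⟩
    · simpa using (im_ofReal_div_pos_iff (pow_pos hc 2)).2 h
    · simp [joukowski.sq_div hc.ne' hu0, hu]
  · exfalso
    obtain ⟨x, rfl⟩ : ∃ x : ℝ, u = x := ⟨u.re, ext rfl (by simp [h])⟩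
    rw [ofReal_ne_zero] at hu0
    rw [eq_sub_iff_add_eq] at hu
    subst hu
    rw [joukowski.ofReal_eq, ← ofReal_add] at hw
    have hlt := mem_twoSlitPlane_iff.1 hw (ofReal_im _)
    rw [ofReal_re] at hlt
    have hle := two_mul_abs_le_abs_add_sq_div c hu0
    rw [abs_of_pos hc, le_abs'] at hle
    rcases hle with hle | hle <;> linarith
  · exact ⟨u, h, by simp [hu]⟩

theorem joukowski_add_const_bijOn (hc : 0 < c) :
    BijOn (fun u => joukowski c u + m) {u | 0 < u.im} (twoSlitPlane (m - 2 * c) (m + 2 * c)) :=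
  ⟨joukowski_add_const_mapsTo m hc, joukowski_add_const_injOn m hc.ne',
    joukowski_add_const_surjOn m hc⟩

end

lemma one_div_sub_bijOn (θ : ℝ) :
    BijOn (fun z : ℂ => 1 / z - θ) {z | z.im < 0} {u | 0 < u.im} := by
  refine ⟨fun z hz => ?_, fun z _ z' _ h => by simpa using h, fun u hu => ?_⟩
  · simpa using (im_ofReal_div_pos_iff one_pos).2 hz
  · refine ⟨1 / (u + θ), ?_, by simp⟩
    simpa using (im_ofReal_div_neg_iff one_pos (u := u + θ)).2 (by simpa using hu)

lemma one_div_add_div_one_sub_mul_eq_joukowski {p θ c : ℝ} (hc : c ^ 2 = p * θ ^ 2) {z : ℂ}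
    (hz : z ≠ 0) (hθz : 1 - (θ : ℂ) * z ≠ 0) :
    1 / z + ((p * θ : ℝ) : ℂ) / (1 - (θ : ℂ) * z) =
      joukowski c (1 / z - θ) + ((p + 1) * θ : ℝ) := by
  have hu : 1 / z - θ = (1 - θ * z) / z := by field_simp
  rw [joukowski, ← ofReal_pow, hc, hu]
  push_cast
  rw [mul_comm] at hθz
  field_simp
  ring

/-- The inverse Cauchy transform of the free Poisson distribution `MP(p, θ)`,
`z ↦ 1/z + pθ/(1 - θz)`, is a bijection from the open lower half-plane onto
`ℂ⁺ ∪ (θ(√p - 1)², θ(√p + 1)²) ∪ ℂ⁻`. -/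
theorem freePoisson_inverse_cauchy_bijOn (p θ : ℝ) (hp : 0 < p) (hθ : 0 < θ) :
    Set.BijOn (fun z : ℂ => 1 / z + (p * θ : ℝ) / (1 - (θ : ℝ) * z))
      {z : ℂ | z.im < 0}
      ({z : ℂ | 0 < z.im} ∪
        {z : ℂ | z.im = 0 ∧ θ * (Real.sqrt p - 1) ^ 2 < z.re ∧
          z.re < θ * (Real.sqrt p + 1) ^ 2} ∪
        {z : ℂ | z.im < 0}) := by
  have hsq : √p ^ 2 = p := sq_sqrt hp.le
  have hF := (joukowski_add_const_bijOn ((p + 1) * θ) (by positivity : 0 < √p * θ)).comp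
    (one_div_sub_bijOn θ)
  rw [show (p + 1) * θ - 2 * (√p * θ) = θ * (√p - 1) ^ 2 by linear_combination (-θ) * hsq,
    show (p + 1) * θ + 2 * (√p * θ) = θ * (√p + 1) ^ 2 by linear_combination (-θ) * hsq] at hF
  refine hF.congr fun z hz => ?_
  have hz0 : z ≠ 0 := by rintro rfl; simp at hz
  have hθz : 1 - (θ : ℂ) * z ≠ 0 := by
    refine ne_of_apply_ne im (ne_of_gt ?_)
    simpa using mul_neg_of_pos_of_neg hθ hz
  exact (one_div_add_div_one_sub_mul_eq_joukowski (by rw [mul_pow, hsq]) hz0 hθz).symm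
end

section
/- Let I ⊂ ℝ be an open interval and let f be analytic on an open set containing I ∪ ℂ⁻ with f integrable on I. Define G(z) = ∫_I f(x)/(z−x) dx for z ∈ ℂ⁺. Then G extends analytically to ℂ⁺ ∪ I ∪ ℂ⁻, and for z ∈ ℂ⁻ the extension equals ∫_I f(x)/(z−x) dx − 2πi f(z). -/
/-!
Writing `f x = (f x - f z) + f z`, the Cauchy transform splits for `z ∉ ℝ` as
`∫_I f x / (z - x) dx = f z * ∫_I (z - x)⁻¹ dx - ∫_I dslope f x z dx`.
The last integral is holomorphic at every point of `U`: the difference quotient `dslope f x z`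
is holomorphic in `z` and locally bounded uniformly in `x`, so Cauchy's estimates allow
differentiation under the integral sign. The middle integral is `log (z - a) - log (z - b)`, and
replacing `log (z - b)` by `log (b - z) + πi`, which agrees with it on `ℂ⁺` and is holomorphic
across `(a, b)`, gives the continuation. On `ℂ⁻` the two branches differ by `2πi`.
-/

open Complex Set MeasureTheory Metric Filter Topology

theorem aestronglyMeasurable_deriv_of_ae_differentiableAt {𝕜 α E : Type*}
    [NontriviallyNormedField 𝕜] [NormedAddCommGroup E] [NormedSpace 𝕜 E] [MeasurableSpace α]
    {μ : Measure α} {F : 𝕜 → α → E} {z₀ : 𝕜}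
    (hF_meas : ∀ z, AEStronglyMeasurable (F z) μ)
    (hF_diff : ∀ᵐ a ∂μ, DifferentiableAt 𝕜 (F · a) z₀) :
    AEStronglyMeasurable (fun a => deriv (F · a) z₀) μ :=
  aestronglyMeasurable_of_tendsto_ae (𝓝[≠] (0 : 𝕜))
    (fun t => ((hF_meas (z₀ + t)).sub (hF_meas z₀)).const_smul t⁻¹)
    (hF_diff.mono fun _ ha => hasDerivAt_iff_tendsto_slope_zero.1 ha.hasDerivAt)

theorem differentiableAt_integral_of_ae_differentiableOn_ball {α E : Type*}
    [MeasurableSpace α] [NormedAddCommGroup E] [NormedSpace ℂ E] [CompleteSpace E]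
    {μ : Measure α} {F : ℂ → α → E} {bound : α → ℝ} {z₀ : ℂ} {R : ℝ} (hR : 0 < R)
    (hF_meas : ∀ z, AEStronglyMeasurable (F z) μ)
    (hF_diff : ∀ᵐ a ∂μ, DifferentiableOn ℂ (F · a) (ball z₀ R))
    (hF_bound : ∀ᵐ a ∂μ, ∀ z ∈ ball z₀ R, ‖F z a‖ ≤ bound a)
    (bound_integrable : Integrable bound μ) :
    DifferentiableAt ℂ (fun z => ∫ a, F z a ∂μ) z₀ := by
  have hR2 : 0 < R / 2 := half_pos hR
  have hsub : ∀ z ∈ ball z₀ (R / 2), closedBall z (R / 2) ⊆ ball z₀ R := fun z hz =>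
    closedBall_subset_ball' (by rw [mem_ball] at hz; linarith)
  have h_hasDeriv :
      ∀ᵐ a ∂μ, ∀ z ∈ ball z₀ (R / 2), HasDerivAt (F · a) (deriv (F · a) z) z := by
    filter_upwards [hF_diff] with a hda z hz
    exact (hda.differentiableAt
      (isOpen_ball.mem_nhds (ball_subset_ball (by linarith) hz))).hasDerivAt
  have h_deriv_bound :
      ∀ᵐ a ∂μ, ∀ z ∈ ball z₀ (R / 2), ‖deriv (F · a) z‖ ≤ bound a / (R / 2) := by
    filter_upwards [hF_diff, hF_bound] with a hda hba z hz
    refine norm_deriv_le_of_forall_mem_sphere_norm_le hR2 ?_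
      fun w hw => hba w (hsub z hz (sphere_subset_closedBall hw))
    exact (hda.mono ((closure_ball z hR2.ne').trans_subset (hsub z hz))).diffContOnCl
  have hF_int : Integrable (F z₀) μ :=
    bound_integrable.mono' (hF_meas z₀) (hF_bound.mono fun a ha => ha z₀ (mem_ball_self hR))
  have hF'_meas := aestronglyMeasurable_deriv_of_ae_differentiableAt hF_meas
    (h_hasDeriv.mono fun a ha => (ha z₀ (mem_ball_self hR2)).differentiableAt)
  exact (hasDerivAt_integral_of_dominated_loc_of_deriv_le (ball_mem_nhds z₀ hR2)
    (Eventually.of_forall hF_meas) hF_int hF'_meas h_deriv_bound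
    (bound_integrable.div_const _) h_hasDeriv).2.differentiableAt

theorem half_abs_im_le_norm_sub_ofReal {z₀ z : ℂ} (hz : z ∈ ball z₀ (|z₀.im| / 2)) (x : ℝ) :
    |z₀.im| / 2 ≤ ‖z - x‖ := by
  have h₁ : |z₀.im - z.im| ≤ ‖z₀ - z‖ := by simpa using abs_im_le_norm (z₀ - z)
  have h₂ : |z.im| ≤ ‖z - x‖ := by simpa using abs_im_le_norm (z - x)
  rw [mem_ball, dist_comm, dist_eq_norm] at hz
  linarith [abs_sub_abs_le_abs_sub z₀.im z.im]

theorem integrable_div_sub_ofReal {μ : Measure ℝ} {g : ℝ → ℂ} (hg : Integrable g μ) {z : ℂ}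
    (hz : z.im ≠ 0) : Integrable (fun x => g x / (z - x)) μ := by
  refine (hg.norm.div_const (|z.im| / 2)).mono' (hg.aestronglyMeasurable.mul (by fun_prop))
    (Eventually.of_forall fun x => ?_)
  rw [norm_div]
  exact div_le_div_of_nonneg_left (norm_nonneg _) (by positivity)
    (half_abs_im_le_norm_sub_ofReal (mem_ball_self (by positivity)) x)

theorem differentiableAt_integral_div_sub_ofReal {μ : Measure ℝ} {g : ℝ → ℂ}
    (hg : Integrable g μ) {z₀ : ℂ} (hz₀ : z₀.im ≠ 0) :
    DifferentiableAt ℂ (fun z => ∫ x, g x / (z - x) ∂μ) z₀ := by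
  have hR : 0 < |z₀.im| / 2 := by positivity
  refine differentiableAt_integral_of_ae_differentiableOn_ball hR
    (fun z => hg.aestronglyMeasurable.mul (by fun_prop))
    (Eventually.of_forall fun x => ?_) (Eventually.of_forall fun x z hz => ?_)
    (hg.norm.div_const (|z₀.im| / 2))
  · refine DifferentiableOn.div (differentiableOn_const _) (by fun_prop) fun z hz h => ?_
    have := half_abs_im_le_norm_sub_ofReal hz x
    rw [h, norm_zero] at this
    linarith
  · rw [norm_div]
    exact div_le_div_of_nonneg_left (norm_nonneg _) hR (half_abs_im_le_norm_sub_ofReal hz x)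

theorem integral_inv_sub_ofReal_Ioo {a b : ℝ} (hab : a ≤ b) {z : ℂ} (hz : z.im ≠ 0) :
    ∫ x in Ioo a b, (z - x)⁻¹ = log (z - a) - log (z - b) := by
  have hslit : ∀ x : ℝ, z - x ∈ slitPlane := fun x =>
    mem_slitPlane_iff.2 (Or.inr (by simpa using hz))
  have hderiv : ∀ x ∈ uIcc a b, HasDerivAt (fun y : ℝ => -log (z - y)) (z - x)⁻¹ x :=
    fun x _ => by
      simpa [neg_div] using
        (((hasDerivAt_id (x : ℂ)).const_sub z).clog (hslit x)).neg.comp_ofReal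
  have hcont : Continuous fun x : ℝ => (z - x)⁻¹ :=
    (continuous_const.sub continuous_ofReal).inv₀ fun x => slitPlane_ne_zero (hslit x)
  rw [← integral_Ioc_eq_integral_Ioo, ← intervalIntegral.integral_of_le hab,
    intervalIntegral.integral_eq_sub_of_hasDerivAt hderiv (hcont.intervalIntegrable a b)]
  ring

theorem log_sub_log_neg_of_im_pos {w : ℂ} (hw : 0 < w.im) :
    log w - log (-w) = Real.pi * I := by
  apply Complex.ext <;> simp [log_re, log_im, arg_neg_eq_arg_sub_pi_of_im_pos hw]

theorem log_sub_log_neg_of_im_neg {w : ℂ} (hw : w.im < 0) :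
    log w - log (-w) = -(Real.pi * I) := by
  apply Complex.ext <;> simp [log_re, log_im, arg_neg_eq_arg_add_pi_of_im_neg hw]

theorem norm_dslope_le_of_norm_deriv_le {𝕜 E : Type*} [RCLike 𝕜] [NormedAddCommGroup E]
    [NormedSpace 𝕜 E] {f : 𝕜 → E} {s : Set 𝕜} {C : ℝ} (hs : Convex ℝ s)
    (hf : ∀ x ∈ s, DifferentiableAt 𝕜 f x) (bound : ∀ x ∈ s, ‖deriv f x‖ ≤ C) {a b : 𝕜}
    (ha : a ∈ s) (hb : b ∈ s) : ‖dslope f a b‖ ≤ C := by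
  rcases eq_or_ne b a with rfl | hba
  · simpa using bound b hb
  · rw [dslope_of_ne f hba, slope_def_module, norm_smul, norm_inv,
      inv_mul_le_iff₀ (norm_pos_iff.2 (sub_ne_zero.2 hba)), mul_comm]
    exact hs.norm_image_sub_le_of_norm_deriv_le hf bound ha hb

theorem ae_ofReal_ne (μ : Measure ℝ) [NullSingletonClass μ] (z : ℂ) :
    ∀ᵐ x : ℝ ∂μ, (x : ℂ) ≠ z := by
  rw [ae_iff]
  refine measure_mono_null (fun x hx => ?_) (measure_singleton z.re)
  simp only [mem_ofPred_eq, not_not] at hx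
  simp [← hx]

theorem aestronglyMeasurable_dslope_ofReal {μ : Measure ℝ} [NullSingletonClass μ] {f : ℂ → ℂ}
    (hf : AEStronglyMeasurable (fun x : ℝ => f x) μ) (z : ℂ) :
    AEStronglyMeasurable (fun x : ℝ => dslope f x z) μ := by
  refine (AEStronglyMeasurable.smul (f := fun x : ℝ => (z - x)⁻¹) (by fun_prop)
    ((aestronglyMeasurable_const (b := f z)).sub hf)).congr
    ((ae_ofReal_ne μ z).mono fun x hx => ?_)
  simp [dslope_of_ne f hx.symm, slope_def_module]

theorem differentiableAt_integral_dslope_ofReal {μ : Measure ℝ} [IsFiniteMeasure μ]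
    [NullSingletonClass μ] {f : ℂ → ℂ} {U : Set ℂ} (hU : IsOpen U) (hf : DifferentiableOn ℂ f U)
    (hμU : ∀ᵐ x : ℝ ∂μ, (x : ℂ) ∈ U) (hfμ : Integrable (fun x : ℝ => f x) μ) {t : ℂ}
    (ht : t ∈ U) : DifferentiableAt ℂ (fun z => ∫ x, dslope f x z ∂μ) t := by
  obtain ⟨ρ, hρ, hρU⟩ := nhds_basis_closedBall.mem_iff.1 (hU.mem_nhds ht)
  obtain ⟨M₀, hM₀⟩ := (isCompact_closedBall t ρ).exists_bound_of_continuousOn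
    (hf.continuousOn.mono hρU)
  obtain ⟨M₁, hM₁⟩ := (isCompact_closedBall t ρ).exists_bound_of_continuousOn
    ((hf.analyticOnNhd hU).deriv.continuousOn.mono hρU)
  have hM₀_nonneg : 0 ≤ M₀ := (norm_nonneg _).trans (hM₀ t (mem_closedBall_self hρ.le))
  have hM₁_nonneg : 0 ≤ M₁ := (norm_nonneg _).trans (hM₁ t (mem_closedBall_self hρ.le))
  have hball : ball t ρ ⊆ U := ball_subset_closedBall.trans hρU
  refine differentiableAt_integral_of_ae_differentiableOn_ball (half_pos hρ)
    (F := fun z (x : ℝ) => dslope f x z)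
    (bound := fun x => M₁ + (M₀ + ‖f x‖) / (ρ / 2))
    (aestronglyMeasurable_dslope_ofReal hfμ.aestronglyMeasurable) ?_ ?_
    ((integrable_const M₁).add (((integrable_const M₀).add hfμ.norm).div_const _))
  · filter_upwards [hμU] with x hx
    exact ((differentiableOn_dslope (hU.mem_nhds hx)).2 hf).mono
      ((ball_subset_ball (by linarith)).trans hball)
  refine Eventually.of_forall fun x z hz => ?_
  have hzρ : z ∈ ball t ρ := ball_subset_ball (by linarith) hz
  have hM₀z : ‖f z‖ ≤ M₀ := hM₀ z (ball_subset_closedBall hzρ)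
  by_cases hx : (x : ℂ) ∈ ball t ρ
  · have hslope := norm_dslope_le_of_norm_deriv_le (convex_ball t ρ)
      (fun w hw => hf.differentiableAt (hU.mem_nhds (hball hw)))
      (fun w hw => hM₁ w (ball_subset_closedBall hw)) hx hzρ
    have : 0 ≤ (M₀ + ‖f x‖) / (ρ / 2) := by positivity
    linarith
  have hzx : ρ / 2 ≤ ‖z - x‖ := by
    rw [mem_ball, not_lt] at hx
    rw [mem_ball] at hz
    linarith [dist_triangle (x : ℂ) z t, dist_eq_norm_sub' (x : ℂ) z]
  have hzx_ne : z ≠ x := fun h => by rw [h, sub_self, norm_zero] at hzx; linarith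
  rw [dslope_of_ne f hzx_ne, slope_def_module, norm_smul, norm_inv, inv_mul_eq_div]
  calc ‖f z - f x‖ / ‖z - x‖ ≤ (M₀ + ‖f x‖) / (ρ / 2) :=
        div_le_div₀ (by positivity) ((norm_sub_le _ _).trans (by gcongr)) (half_pos hρ) hzx
    _ ≤ M₁ + (M₀ + ‖f x‖) / (ρ / 2) := le_add_of_nonneg_left hM₁_nonneg

theorem integral_dslope_ofReal_eq {μ : Measure ℝ} [IsFiniteMeasure μ] {f : ℂ → ℂ}
    (hf : Integrable (fun x : ℝ => f x) μ) {z : ℂ} (hz : z.im ≠ 0) :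
    ∫ x, dslope f x z ∂μ = f z * (∫ x, (z - x)⁻¹ ∂μ) - ∫ x, f x / (z - x) ∂μ := by
  have hinv : Integrable (fun x : ℝ => (z - x)⁻¹) μ := by
    simpa using integrable_div_sub_ofReal (integrable_const (1 : ℂ)) hz
  rw [← integral_const_mul, ← integral_sub (hinv.const_mul _) (integrable_div_sub_ofReal hf hz)]
  refine integral_congr_ae (Eventually.of_forall fun x => ?_)
  have hzx : z ≠ x := fun h => hz (by simp [h])
  simp only [dslope_of_ne f hzx, slope_def_field]
  ring

noncomputable def cauchyTransformContinuation (f : ℂ → ℂ) (a b : ℝ) (z : ℂ) : ℂ :=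
  f z * (log (z - a) - log (b - z) - Real.pi * I) - ∫ x in Ioo a b, dslope f x z

section cauchyTransformContinuation

variable {f : ℂ → ℂ} {a b : ℝ} {z : ℂ}

theorem cauchyTransformContinuation_eq_of_im_ne_zero (hab : a ≤ b)
    (hf : IntegrableOn (fun x : ℝ => f x) (Ioo a b)) (hz : z.im ≠ 0) :
    cauchyTransformContinuation f a b z = (∫ x in Ioo a b, f x / (z - x)) +
      f z * (log (z - b) - log (-(z - b)) - Real.pi * I) := by
  rw [cauchyTransformContinuation, integral_dslope_ofReal_eq hf hz,
    integral_inv_sub_ofReal_Ioo hab hz, neg_sub]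
  ring

theorem cauchyTransformContinuation_of_im_pos (hab : a ≤ b)
    (hf : IntegrableOn (fun x : ℝ => f x) (Ioo a b)) (hz : 0 < z.im) :
    cauchyTransformContinuation f a b z = ∫ x in Ioo a b, f x / (z - x) := by
  rw [cauchyTransformContinuation_eq_of_im_ne_zero hab hf hz.ne',
    log_sub_log_neg_of_im_pos (by simpa using hz)]
  ring

theorem cauchyTransformContinuation_of_im_neg (hab : a ≤ b)
    (hf : IntegrableOn (fun x : ℝ => f x) (Ioo a b)) (hz : z.im < 0) :
    cauchyTransformContinuation f a b z =
      (∫ x in Ioo a b, f x / (z - x)) - 2 * Real.pi * I * f z := by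
  rw [cauchyTransformContinuation_eq_of_im_ne_zero hab hf hz.ne,
    log_sub_log_neg_of_im_neg (by simpa using hz)]
  ring

theorem differentiableAt_cauchyTransformContinuation {U : Set ℂ} (hU : IsOpen U)
    (hf : DifferentiableOn ℂ f U) (hIU : ∀ x ∈ Ioo a b, (x : ℂ) ∈ U)
    (hint : IntegrableOn (fun x : ℝ => f x) (Ioo a b)) (hzU : z ∈ U)
    (ha : z - a ∈ slitPlane) (hb : b - z ∈ slitPlane) :
    DifferentiableAt ℂ (cauchyTransformContinuation f a b) z := by
  have hlog : DifferentiableAt ℂ (fun w => log (w - a) - log (b - w) - Real.pi * I) z := by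
    fun_prop (disch := assumption)
  exact ((hf.differentiableAt (hU.mem_nhds hzU)).mul hlog).sub
    (differentiableAt_integral_dslope_ofReal hU hf
      (ae_restrict_of_forall_mem measurableSet_Ioo hIU) hint hzU)

end cauchyTransformContinuation

/-- Analytic continuation of the Cauchy transform of `f(x) 1_I(x) dx` through the
interval `I = (a,b)`: if `f` is analytic on an open set containing `I ∪ ℂ⁻` and
integrable on `I`, then `G(z) = ∫_I f(x)/(z-x) dx` (defined for `z ∈ ℂ⁺`) extends
holomorphically to `ℂ⁺ ∪ I ∪ ℂ⁻`, and on `ℂ⁻` the extension equals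
`∫_I f(x)/(z-x) dx - 2πi f(z)`. -/
theorem cauchy_transform_analytic_continuation (a b : ℝ) (f : ℂ → ℂ)
    (U : Set ℂ) (hU : IsOpen U)
    (hIU : {z : ℂ | z.im = 0 ∧ z.re ∈ Set.Ioo a b} ⊆ U)
    (hCU : {z : ℂ | z.im < 0} ⊆ U)
    (hf : DifferentiableOn ℂ f U)
    (hint : MeasureTheory.IntegrableOn (fun x : ℝ => f x) (Set.Ioo a b)) :
    ∃ G : ℂ → ℂ,
      DifferentiableOn ℂ G
        ({z : ℂ | 0 < z.im} ∪ {z : ℂ | z.im = 0 ∧ z.re ∈ Set.Ioo a b} ∪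
          {z : ℂ | z.im < 0}) ∧
      (∀ z : ℂ, 0 < z.im → G z = ∫ x in Set.Ioo a b, f x / (z - x)) ∧
      (∀ z : ℂ, z.im < 0 →
        G z = (∫ x in Set.Ioo a b, f x / (z - x)) - 2 * Real.pi * Complex.I * f z) := by
  -- An empty `Ioo a b` is replaced by `Ioo a a`, for which `integral_inv_sub_ofReal_Ioo` holds.
  obtain ⟨c, hac, hIoo⟩ : ∃ c, a ≤ c ∧ Ioo a b = Ioo a c :=
    ⟨max a b, le_max_left a b, by rcases le_total a b with h | h <;> simp [h]⟩
  rw [hIoo] at hIU hint ⊢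
  have hIU' : ∀ x ∈ Ioo a c, (x : ℂ) ∈ U := fun x hx => hIU ⟨ofReal_im x, hx⟩
  refine ⟨cauchyTransformContinuation f a c, ?_,
    fun z hz => cauchyTransformContinuation_of_im_pos hac hint hz,
    fun z hz => cauchyTransformContinuation_of_im_neg hac hint hz⟩
  rintro z ((hz | ⟨hz_im, hz_re⟩) | hz)
  · have hG : cauchyTransformContinuation f a c =ᶠ[𝓝 z]
        fun w => ∫ x in Ioo a c, f x / (w - x) :=
      eventually_of_mem ((isOpen_lt continuous_const continuous_im).mem_nhds hz)
        fun w hw => cauchyTransformContinuation_of_im_pos hac hint hw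
    exact ((differentiableAt_integral_div_sub_ofReal hint hz.ne').congr_of_eventuallyEq
      hG).differentiableWithinAt
  · refine (differentiableAt_cauchyTransformContinuation hU hf hIU' hint (hIU ⟨hz_im, hz_re⟩)
      ?_ ?_).differentiableWithinAt <;>
    exact mem_slitPlane_iff.2
      (Or.inl (by rw [sub_re, ofReal_re]; linarith [hz_re.1, hz_re.2]))
  · refine (differentiableAt_cauchyTransformContinuation hU hf hIU' hint (hCU hz)
      ?_ ?_).differentiableWithinAt <;>
    exact mem_slitPlane_iff.2 (Or.inr (by simpa using hz.ne))
end

section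
/- Let 0 < s < 1 and 0 < a < b. For every z in the upper or lower open half-plane, the complex number (bˢ − zˢ)(zˢ − aˢ) lies in ℂ \ (−∞, 0], where zˢ denotes the principal power. Consequently its principal square root is well defined and has positive real part. -/
open Complex

/-! For non-real `z` and `0 < s ≤ 1`, `s · arg z` is a nonzero angle in `(-π, π)`, so `zˢ` is
non-real too. Writing `(B - w)(w - A) = ((B - A)/2)² - (w - (A + B)/2)²` with `A, B` real, the
square of the non-real number `w - (A + B)/2` is either non-real or negative, so the product lies
in the slit plane, where the principal square root has positive real part. -/

namespace Complex

theorem cpow_ofReal_im_ne_zero {z : ℂ} (hz : z.im ≠ 0) {s : ℝ} (hs0 : 0 < s) (hs1 : s ≤ 1) :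
    (z ^ (s : ℂ)).im ≠ 0 := by
  have hz0 : z ≠ 0 := fun h => hz (by simp [h])
  have harg0 : z.arg ≠ 0 := fun h => hz (arg_eq_zero_iff.mp h).2
  have harg_lt : z.arg < Real.pi := (arg_le_pi z).lt_of_ne fun h => hz (arg_eq_pi_iff.mp h).2
  have harg_gt : -Real.pi < z.arg := neg_pi_lt_arg z
  have hsin : Real.sin (z.arg * s) ≠ 0 := by
    rw [Ne, Real.sin_eq_zero_iff_of_lt_of_lt (by nlinarith [Real.pi_pos])
      (by nlinarith [Real.pi_pos]), mul_eq_zero, not_or]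
    exact ⟨harg0, hs0.ne'⟩
  rw [cpow_ofReal_im]
  exact mul_ne_zero (Real.rpow_pos_of_pos (norm_pos_iff.mpr hz0) s).ne' hsin

theorem ofReal_sub_sq_mem_slitPlane {c : ℝ} (hc : 0 ≤ c) {u : ℂ} (hu : u.im ≠ 0) :
    (c : ℂ) - u ^ 2 ∈ slitPlane := by
  rw [mem_slitPlane_iff]
  by_cases hre : u.re = 0
  · left
    have : 0 < u.im ^ 2 := by positivity
    simp only [sub_re, ofReal_re, pow_two, mul_re, hre]
    nlinarith
  · right
    simp only [sub_im, ofReal_im, pow_two, mul_im]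
    intro h
    exact mul_ne_zero hre hu (by linarith)

theorem ofReal_sub_mul_sub_ofReal_mem_slitPlane (A B : ℝ) {w : ℂ} (hw : w.im ≠ 0) :
    ((B : ℂ) - w) * (w - A) ∈ slitPlane := by
  have hid : ((B : ℂ) - w) * (w - A) = (((B - A) / 2) ^ 2 : ℝ) - (w - ((A + B) / 2 : ℝ)) ^ 2 := by
    push_cast; ring
  rw [hid]
  exact ofReal_sub_sq_mem_slitPlane (sq_nonneg _) (by simpa using hw)

theorem norm_add_re_pos_of_mem_slitPlane {x : ℂ} (hx : x ∈ slitPlane) : 0 < ‖x‖ + x.re := by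
  rcases mem_slitPlane_iff.mp hx with hre | him
  · linarith [norm_nonneg x]
  · linarith [neg_abs_le x.re, abs_re_lt_norm.mpr him]

theorem cpow_inv_two_re_pos {x : ℂ} (hx : x ∈ slitPlane) : 0 < (x ^ (2⁻¹ : ℂ)).re := by
  rw [cpow_inv_two_re]
  exact Real.sqrt_pos.mpr (by linarith [norm_add_re_pos_of_mem_slitPlane hx])

end Complex

/-- For `0 < s < 1`, `0 < a < b` and `z` in the open upper or lower half-plane,
`(bˢ - zˢ)(zˢ - aˢ)` (principal powers) avoids `(-∞, 0]`, and its principal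
square root has positive real part. -/
theorem principal_sqrt_pos_re (s a b : ℝ) (hs0 : 0 < s) (hs1 : s < 1)
    (ha : 0 < a) (hab : a < b) (z : ℂ) (hz : z.im ≠ 0) :
    ¬ ((((b : ℂ) ^ (s : ℂ) - z ^ (s : ℂ)) * (z ^ (s : ℂ) - (a : ℂ) ^ (s : ℂ))).im = 0 ∧
        (((b : ℂ) ^ (s : ℂ) - z ^ (s : ℂ)) * (z ^ (s : ℂ) - (a : ℂ) ^ (s : ℂ))).re ≤ 0) ∧
    0 < ((((b : ℂ) ^ (s : ℂ) - z ^ (s : ℂ)) *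
          (z ^ (s : ℂ) - (a : ℂ) ^ (s : ℂ))) ^ (1 / 2 : ℂ)).re := by
  have hmem : ((b : ℂ) ^ (s : ℂ) - z ^ (s : ℂ)) * (z ^ (s : ℂ) - (a : ℂ) ^ (s : ℂ)) ∈
      slitPlane := by
    rw [← ofReal_cpow ha.le, ← ofReal_cpow (ha.trans hab).le]
    exact ofReal_sub_mul_sub_ofReal_mem_slitPlane _ _ (cpow_ofReal_im_ne_zero hz hs0 hs1.le)
  refine ⟨?_, ?_⟩
  · rw [mem_slitPlane_iff] at hmem
    rintro ⟨him, hre⟩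
    rcases hmem with h | h
    exacts [hre.not_gt h, h him]
  · rw [one_div]
    exact cpow_inv_two_re_pos hmem
end

section
/- Let 0 < s < 1, 0 < p ≤ 1/(2s), q ≥ 1 with q − 3/2 ≤ s(p+q−1), and define for x < 0 the boundary value f(x−i0) = −(s/B(p,q)) |x|^{ps−1} e^{−iπps} (1 − |x|ˢ e^{−iπs})^{q−1} (principal powers). Then Re f(x−i0) ≤ 0 for every x < 0. -/
open Complex Real

/-!
Write `w = 1 - |x|ˢ e^{-iπs} = 1 + |x|ˢ e^{i(π - πs)}`. As a sum of two vectors of arguments `0` and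
`π - πs`, `w` has argument in `[0, π - πs]`. Hence `e^{-iπps} w^{q-1}` has argument
`-πps + (q - 1) arg w ∈ [-πps, -πps + (q - 1)(π - πs)] ⊆ [-π/2, π/2]`, so its real part is
nonnegative, and the remaining factor `-(s/B) |x|^{ps-1}` is a nonpositive real number.
-/

namespace Complex

lemma re_one_add_ofReal_mul_exp (β t : ℝ) :
    (1 + t * exp (β * I)).re = 1 + t * Real.cos β := by
  simp [exp_ofReal_mul_I_re]

lemma im_one_add_ofReal_mul_exp (β t : ℝ) :
    (1 + t * exp (β * I)).im = t * Real.sin β := by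
  simp [exp_ofReal_mul_I_im]

lemma norm_one_add_ofReal_mul_exp_sq (β t : ℝ) :
    ‖1 + t * exp (β * I)‖ ^ 2 = (t + Real.cos β) ^ 2 + Real.sin β ^ 2 := by
  rw [Complex.sq_norm, normSq_apply, re_one_add_ofReal_mul_exp, im_one_add_ofReal_mul_exp]
  linear_combination (t ^ 2 - 1) * Real.sin_sq_add_cos_sq β

lemma cos_mul_norm_one_add_ofReal_mul_exp_le (β : ℝ) {t : ℝ} (ht : 0 ≤ t) :
    Real.cos β * ‖1 + t * exp (β * I)‖ ≤ (1 + t * exp (β * I)).re := by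
  set w : ℂ := 1 + t * exp (β * I)
  rw [re_one_add_ofReal_mul_exp]
  have hc := Real.cos_le_one β
  -- `‖w‖ ≤ 1 + t` suffices when `cos β ≥ 0`, and `‖w‖ ≥ t + cos β` when `cos β ≤ 0`.
  rcases le_total 0 (Real.cos β) with hc0 | hc0
  · have hw : ‖w‖ ≤ 1 + t := by
      calc ‖w‖ ≤ ‖(1 : ℂ)‖ + ‖(t : ℂ) * exp (β * I)‖ := norm_add_le _ _
        _ = 1 + t := by simp [norm_exp_ofReal_mul_I, abs_of_nonneg ht]
    nlinarith
  · have hw : t + Real.cos β ≤ ‖w‖ :=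
      abs_le_of_sq_le_sq' (by rw [norm_one_add_ofReal_mul_exp_sq]; nlinarith) (norm_nonneg w) |>.2
    nlinarith [Real.cos_sq_le_one β]

lemma arg_one_add_ofReal_mul_exp_le {β t : ℝ} (hβ0 : 0 ≤ β) (hβ : β ≤ π) (ht : 0 ≤ t) :
    arg (1 + t * exp (β * I)) ≤ β := by
  set w : ℂ := 1 + t * exp (β * I)
  rcases eq_or_ne w 0 with hw | hw
  · simpa [hw] using hβ0
  have him : 0 ≤ w.im := by
    rw [im_one_add_ofReal_mul_exp]
    exact mul_nonneg ht (sin_nonneg_of_nonneg_of_le_pi hβ0 hβ)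
  have hcos : Real.cos β ≤ Real.cos (arg w) := by
    rw [cos_arg hw, le_div_iff₀ (norm_pos_iff.2 hw)]
    exact cos_mul_norm_one_add_ofReal_mul_exp_le β ht
  exact (Real.strictAntiOn_cos.le_iff_ge ⟨hβ0, hβ⟩ ⟨arg_nonneg_iff.2 him, arg_le_pi w⟩).1 hcos

lemma one_sub_ofReal_mul_exp_neg_mul_I (α t : ℝ) :
    1 - t * exp (-α * I) = 1 + t * exp ((π - α : ℝ) * I) := by
  rw [ofReal_sub, sub_mul, exp_sub, exp_pi_mul_I, neg_mul, exp_neg, div_eq_mul_inv, neg_one_mul]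
  ring

lemma re_exp_mul_I_mul_cpow_ofReal {w : ℂ} (hw : w ≠ 0) (φ y : ℝ) :
    (exp (φ * I) * w ^ (y : ℂ)).re = ‖w‖ ^ y * Real.cos (φ + y * arg w) := by
  rw [cpow_def_of_ne_zero hw, ← exp_add, exp_re, Real.rpow_def_of_pos (norm_pos_iff.2 hw)]
  simp [log_re, log_im, mul_comm]

end Complex

/-- Boundary value of the analytically continued density of a power of a beta
random variable on the negative half-line: if `0 < s < 1`, `0 < p ≤ 1/(2s)`,
`q ≥ 1`, `q - 3/2 ≤ s(p+q-1)`, then for `x < 0`,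
`f(x - i0) = -(s/B(p,q)) |x|^{ps-1} e^{-iπps} (1 - |x|ˢ e^{-iπs})^{q-1}`
has nonpositive real part. -/
theorem beta_power_boundary_re_nonpos (s p q : ℝ) (hs0 : 0 < s) (hs1 : s < 1)
    (hp0 : 0 < p) (hp : p ≤ 1 / (2 * s)) (hq : 1 ≤ q)
    (hq2 : q - 3 / 2 ≤ s * (p + q - 1))
    (B : ℝ) (hB : B = Real.Gamma p * Real.Gamma q / Real.Gamma (p + q))
    (x : ℝ) (hx : x < 0) :
    (-(s / B : ℂ) * (|x| : ℝ) ^ ((p * s - 1 : ℝ) : ℂ) *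
        Complex.exp (-(Real.pi * p * s) * Complex.I) *
        (1 - ((|x| : ℝ) ^ (s : ℝ) : ℝ) * Complex.exp (-(Real.pi * s) * Complex.I))
          ^ ((q - 1 : ℝ) : ℂ)).re ≤ 0 := by
  set w : ℂ := 1 + (|x| ^ s : ℝ) * exp ((π - π * s : ℝ) * I)
  have hw_eq : 1 - ((|x| ^ s : ℝ) : ℂ) * exp (-(π * s) * I) = w := by
    rw [← ofReal_mul, one_sub_ofReal_mul_exp_neg_mul_I]
  have hw_im : 0 < w.im := by
    rw [im_one_add_ofReal_mul_exp]
    exact mul_pos (rpow_pos_of_pos (abs_pos.2 hx.ne) s)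
      (sin_pos_of_pos_of_lt_pi (by nlinarith [pi_pos]) (by nlinarith [pi_pos]))
  have harg0 : 0 ≤ arg w := arg_nonneg_iff.2 hw_im.le
  have harg : arg w ≤ π - π * s :=
    arg_one_add_ofReal_mul_exp_le (by nlinarith [pi_pos]) (by nlinarith [pi_pos]) (by positivity)
  have hphase : 0 ≤ Real.cos (-(π * p * s) + (q - 1) * arg w) := by
    have hps : p * s ≤ 1 / 2 := by
      rw [le_div_iff₀ (by positivity)] at hp
      linarith
    exact cos_nonneg_of_mem_Icc ⟨by nlinarith [pi_pos], by nlinarith [pi_pos]⟩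
  have hcoef : -(s / B) * |x| ^ (p * s - 1) ≤ 0 := by
    have hB0 : 0 < B := by
      rw [hB]
      exact div_pos (mul_pos (Gamma_pos_of_pos hp0) (Gamma_pos_of_pos (by linarith)))
        (Gamma_pos_of_pos (by linarith))
    exact mul_nonpos_of_nonpos_of_nonneg (neg_nonpos.2 (div_pos hs0 hB0).le)
      (rpow_nonneg (abs_nonneg x) _)
  have hsplit : -(s / B : ℂ) * (|x| : ℝ) ^ ((p * s - 1 : ℝ) : ℂ) * exp (-(π * p * s) * I) *
        (1 - ((|x| ^ s : ℝ) : ℂ) * exp (-(π * s) * I)) ^ ((q - 1 : ℝ) : ℂ) =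
      ((-(s / B) * |x| ^ (p * s - 1) : ℝ) : ℂ) *
        (exp ((-(π * p * s) : ℝ) * I) * w ^ ((q - 1 : ℝ) : ℂ)) := by
    rw [hw_eq, ← ofReal_cpow (abs_nonneg x)]
    push_cast
    ring
  rw [hsplit, re_ofReal_mul, re_exp_mul_I_mul_cpow_ofReal (fun h => by simp [h] at hw_im)]
  exact mul_nonpos_of_nonpos_of_nonneg hcoef (mul_nonneg (rpow_nonneg (norm_nonneg w) _) hphase)
end

section
/- If X has density f(x) = C x^{p−1} Π_{k=1}^n (t_k + x)^{−γ_k} on (0,∞) with C, p, t_k, γ_k > 0 and p < Σ_k γ_k, then X⁻¹ has density C' x^{p'−1} Π_{k=1}^n (t_k⁻¹ + x)^{−γ_k} on (0,∞), where C' = C Π_k t_k^{−γ_k} and p' = −p + Σ_k γ_k. Moreover if 0 < p ≤ 1/2 and 0 < Σ_k γ_k − p ≤ 1/2, then also 0 < p' ≤ 1/2 and 0 < Σ_k γ_k − p' ≤ 1/2. -/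
open Real MeasureTheory Finset Set

lemma hcm_key {n : ℕ} (C p : ℝ) (t γ : Fin n → ℝ) (ht : ∀ k, 0 < t k)
    (hγ : ∀ k, 0 < γ k) {y : ℝ} (hy : 0 < y) :
    |(-(y ^ 2)⁻¹)| • (C * (y⁻¹) ^ (p - 1) * ∏ k, (t k + y⁻¹) ^ (-γ k)) =
      (C * ∏ k, (t k) ^ (-γ k)) * y ^ ((-p + ∑ k, γ k) - 1) *
        ∏ k, ((t k)⁻¹ + y) ^ (-γ k) := by
  have hprod : (∏ k, (t k + y⁻¹) ^ (-γ k))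
      = (∏ k, (t k) ^ (-γ k)) * (∏ k, ((t k)⁻¹ + y) ^ (-γ k)) * y ^ (∑ k, γ k) := by
    rw [Real.rpow_sum_of_nonneg hy.le (fun k _ => (hγ k).le), ← Finset.prod_mul_distrib,
      ← Finset.prod_mul_distrib]
    refine Finset.prod_congr rfl fun k _ => ?_
    have htk := ht k
    have hpos : (0:ℝ) < (t k)⁻¹ + y := by positivity
    have heq : t k + y⁻¹ = (t k * ((t k)⁻¹ + y)) * y⁻¹ := by field_simp; ring
    rw [heq, Real.mul_rpow (by positivity) (by positivity),
      Real.mul_rpow htk.le hpos.le, Real.inv_rpow hy.le, ← Real.rpow_neg hy.le, neg_neg]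
  have habs : |(-(y ^ 2)⁻¹)| = y ^ (-2 : ℝ) := by
    rw [abs_neg, abs_inv, abs_of_pos (by positivity : (0:ℝ) < y ^ 2)]
    rw [← Real.rpow_natCast y 2, ← Real.rpow_neg hy.le]
    norm_num
  have hinv : (y⁻¹) ^ (p - 1) = y ^ (1 - p) := by
    rw [Real.inv_rpow hy.le, ← Real.rpow_neg hy.le]
    ring_nf
  rw [smul_eq_mul, habs, hprod, hinv]
  rw [show ((-p + ∑ k, γ k) - 1 : ℝ) = (-2) + ((1 - p) + ∑ k, γ k) by ring,
    Real.rpow_add hy, Real.rpow_add hy]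
  ring

/-- If `X` has density `C x^{p-1} Π_k (t_k + x)^{-γ_k}` on `(0,∞)`, then `X⁻¹`
has density `C' x^{p'-1} Π_k (t_k⁻¹ + x)^{-γ_k}` on `(0,∞)`, where
`C' = C Π_k t_k^{-γ_k}` and `p' = -p + Σ_k γ_k`; moreover the parameter
conditions `0 < p ≤ 1/2`, `0 < Σγ - p ≤ 1/2` are preserved. -/
theorem hcm_inverse_density (n : ℕ) (C p : ℝ) (t γ : Fin n → ℝ)
    (hC : 0 < C) (hp : 0 < p) (ht : ∀ k, 0 < t k) (hγ : ∀ k, 0 < γ k)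
    (hpγ : p < ∑ k, γ k)
    (μ : Measure ℝ)
    (hμ : ∀ A : Set ℝ, MeasurableSet A →
      μ A = ENNReal.ofReal
        (∫ x in A ∩ Set.Ioi (0 : ℝ), C * x ^ (p - 1) * ∏ k, (t k + x) ^ (-γ k))) :
    (∀ A : Set ℝ, MeasurableSet A → A ⊆ Set.Ioi (0 : ℝ) →
      μ ((fun x : ℝ => x⁻¹) ⁻¹' A)
        = ENNReal.ofReal
            (∫ x in A,
              (C * ∏ k, (t k) ^ (-γ k)) * x ^ ((-p + ∑ k, γ k) - 1) *
                ∏ k, ((t k)⁻¹ + x) ^ (-γ k))) ∧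
    (p ≤ 1 / 2 → 0 < (∑ k, γ k) - p → (∑ k, γ k) - p ≤ 1 / 2 →
      (0 < -p + ∑ k, γ k ∧ -p + ∑ k, γ k ≤ 1 / 2 ∧
        0 < (∑ k, γ k) - (-p + ∑ k, γ k) ∧ (∑ k, γ k) - (-p + ∑ k, γ k) ≤ 1 / 2)) := by
  constructor
  · intro A hA hAsub
    have hpre : MeasurableSet ((fun x : ℝ => x⁻¹) ⁻¹' A) := hA.preimage measurable_inv
    rw [hμ _ hpre]
    congr 1
    have hcap : ((fun x : ℝ => x⁻¹) ⁻¹' A) ∩ Set.Ioi (0 : ℝ)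
        = (fun x : ℝ => x⁻¹) ⁻¹' A := by
      refine Set.inter_eq_left.mpr fun x hx => ?_
      have : (0:ℝ) < x⁻¹ := hAsub hx
      exact inv_pos.mp this
    rw [hcap]
    have himg : (fun x : ℝ => x⁻¹) ⁻¹' A = (fun x : ℝ => x⁻¹) '' A :=
      congrFun (Set.image_eq_preimage_of_inverse (fun x : ℝ => inv_inv x)
        (fun x : ℝ => inv_inv x)).symm A
    rw [himg]
    rw [integral_image_eq_integral_abs_deriv_smul hA
      (fun x hx => (hasDerivAt_inv (ne_of_gt (hAsub hx))).hasDerivWithinAt)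
      (fun a _ b _ h => inv_injective h)]
    refine setIntegral_congr_fun hA fun y hy => ?_
    exact hcm_key C p t γ ht hγ (hAsub hy)
  · intro h1 h2 h3
    refine ⟨by linarith, by linarith, by linarith, by linarith⟩
end

section
/- Let F be holomorphic on an open set U ⊂ ℂ containing the negative imaginary axis i(−∞,0), with F(iy) ∈ iℝ and F'(iy) ∈ ℝ \ {0} for all y < 0, and suppose F' has no zeros on U. If F'(iy) > 0 for all y < 0, then F is univalent (injective) on some open neighborhood of i(−∞,0) contained in U. -/
/-!
Near each point `s i` of the axis, `F'` stays within `m / 2` of `m = F'(s i) > 0` on a closed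
disc of radius `ρ`, so on that disc `F` is a perturbation of the dilation `z ↦ m z` and is
injective. Take `V` to be the union of the concentric discs of radius `ρ / 7`. Two points of `V`
that do not lie in a common large disc are vertically far apart; along the axis `y ↦ Im F(y i)`
is increasing and grows at rate at least `m / 2` near each centre, and this growth beats the
oscillation of `Im F` across the small discs, so the two images have different imaginary parts.
-/

open Complex Set Metric

theorem Convex.norm_sub_sub_smul_le_of_norm_deriv_sub_le {𝕜 E : Type*} [RCLike 𝕜]
    [NormedAddCommGroup E] [NormedSpace 𝕜 E] {f : 𝕜 → E} {s : Set 𝕜} {A : E} {C : ℝ}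
    (hs : Convex ℝ s) (hf : ∀ z ∈ s, DifferentiableAt 𝕜 f z)
    (hbound : ∀ z ∈ s, ‖deriv f z - A‖ ≤ C) {z w : 𝕜} (hz : z ∈ s) (hw : w ∈ s) :
    ‖f w - f z - (w - z) • A‖ ≤ C * ‖w - z‖ := by
  have hg : ∀ x ∈ s, HasDerivAt (fun x => f x - x • A) (deriv f x - A) x := fun x hx => by
    have := (hf x hx).hasDerivAt.sub ((hasDerivAt_id x).smul_const A)
    rwa [one_smul] at this
  have := hs.norm_image_sub_le_of_norm_deriv_le (fun x hx => (hg x hx).differentiableAt)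
    (fun x hx => (hg x hx).deriv ▸ hbound x hx) hz hw
  convert this using 2
  rw [sub_smul]
  abel

theorem dist_ofReal_mul_I (x y : ℝ) : dist ((x : ℂ) * I) (y * I) = |x - y| := by
  rw [dist_of_re_eq (by simp)]
  simp [Real.dist_eq]

def ApproxDilationOn (F : ℂ → ℂ) (m : ℝ) (s : Set ℂ) : Prop :=
  ∀ z ∈ s, ∀ w ∈ s, ‖F w - F z - m * (w - z)‖ ≤ m / 2 * ‖w - z‖

namespace ApproxDilationOn

variable {F : ℂ → ℂ} {m : ℝ} {s : Set ℂ}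

theorem injOn (h : ApproxDilationOn F m s) (hm : 0 < m) : InjOn F s := by
  intro z hz w hw hzw
  have hbound := h z hz w hw
  rw [hzw, sub_self, zero_sub, norm_neg, norm_mul, norm_real, Real.norm_of_nonneg hm.le] at hbound
  have : ‖w - z‖ = 0 := by nlinarith [norm_nonneg (w - z)]
  exact (sub_eq_zero.mp (norm_eq_zero.mp this)).symm

theorem abs_im_sub_sub_le (h : ApproxDilationOn F m s) {z w : ℂ} (hz : z ∈ s) (hw : w ∈ s) :
    |(F w - F z).im - m * (w - z).im| ≤ m / 2 * ‖w - z‖ := by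
  have := (abs_im_le_norm _).trans (h z hz w hw)
  simpa using this

theorem abs_im_sub_le (h : ApproxDilationOn F m s) (hm : 0 ≤ m) {z w : ℂ} (hz : z ∈ s)
    (hw : w ∈ s) : |(F w).im - (F z).im| ≤ 3 / 2 * m * dist w z := by
  have hdev := h.abs_im_sub_sub_le hz hw
  have him : |m * (w - z).im| ≤ m * ‖w - z‖ := by
    rw [abs_mul, abs_of_nonneg hm]
    exact mul_le_mul_of_nonneg_left (abs_im_le_norm _) hm
  rw [dist_eq_norm, ← sub_im]
  rw [abs_le] at hdev him ⊢
  constructor <;> linarith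

theorem sub_le_im_sub_axis (h : ApproxDilationOn F m s) {x y : ℝ} (hx : (x : ℂ) * I ∈ s)
    (hy : (y : ℂ) * I ∈ s) (hxy : x ≤ y) :
    m / 2 * (y - x) ≤ (F (y * I)).im - (F (x * I)).im := by
  have := h.abs_im_sub_sub_le hx hy
  rw [← dist_eq_norm, dist_ofReal_mul_I, abs_of_nonneg (sub_nonneg.2 hxy)] at this
  have him : ((y : ℂ) * I - x * I).im = y - x := by simp
  rw [him, sub_im, abs_le] at this
  linarith [this.1]

end ApproxDilationOn

theorem exists_closedBall_approxDilationOn {F : ℂ → ℂ} {U : Set ℂ} {c : ℂ} {m : ℝ}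
    (hU : IsOpen U) (hF : DifferentiableOn ℂ F U) (hc : c ∈ U) (hm : 0 < m)
    (hderiv : deriv F c = m) :
    ∃ ρ > 0, closedBall c ρ ⊆ U ∧ ApproxDilationOn F m (closedBall c ρ) := by
  have hcont : ContinuousAt (deriv F) c := ((hF.analyticOnNhd hU).deriv c hc).continuousAt
  have hev : ∀ᶠ z in nhds c, z ∈ U ∧ ‖deriv F z - m‖ ≤ m / 2 := by
    refine Filter.Eventually.and (hU.mem_nhds hc) ?_
    rw [← hderiv]
    exact hcont.eventually (closedBall_mem_nhds _ (half_pos hm)) |>.mono fun z hz => by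
      simpa [dist_eq_norm] using hz
  obtain ⟨ρ, hρ, hball⟩ := nhds_basis_closedBall.eventually_iff.mp hev
  refine ⟨ρ, hρ, fun z hz => (hball hz).1, fun z hz w hw => ?_⟩
  simpa [smul_eq_mul, mul_comm] using
    (convex_closedBall c ρ).norm_sub_sub_smul_le_of_norm_deriv_sub_le
      (fun x hx => hF.differentiableAt (hU.mem_nhds (hball hx).1)) (fun x hx => (hball hx).2) hz hw

theorem monotoneOn_im_comp_ofReal_mul_I {F : ℂ → ℂ} {D : Set ℝ} (hD : Convex ℝ D)
    (hF : ∀ y ∈ D, DifferentiableAt ℂ F (y * I)) (hpos : ∀ y ∈ D, 0 ≤ (deriv F (y * I)).re) :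
    MonotoneOn (fun y : ℝ => (F (y * I)).im) D := by
  have hderiv : ∀ y ∈ D, HasDerivAt (fun y : ℝ => (F (y * I)).im) (deriv F (y * I)).re y := by
    intro y hy
    have h := ((hF y hy).hasDerivAt.comp (y : ℂ) ((hasDerivAt_id (y : ℂ)).mul_const I)).comp_ofReal
    have h2 := imCLM.hasFDerivAt.comp_hasDerivAt y h
    simp only [Function.comp_def, imCLM_apply, id, one_mul, mul_I_im] at h2
    exact h2
  exact monotoneOn_of_hasDerivWithinAt_nonneg hD
    (fun y hy => (hderiv y hy).continuousAt.continuousWithinAt)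
    (fun y hy => (hderiv y (interior_subset hy)).hasDerivWithinAt)
    fun y hy => hpos y (interior_subset hy)

theorem im_lt_im_of_far_apart {F : ℂ → ℂ} {s t ρ ρ' m m' : ℝ} {a b : ℂ}
    (hψ : MonotoneOn (fun y : ℝ => (F (y * I)).im) (Iio 0)) (hst : s ≤ t) (ht : t < 0)
    (hm : 0 < m) (hm' : 0 < m')
    (hs_approx : ApproxDilationOn F m (closedBall (s * I) ρ))
    (ht_approx : ApproxDilationOn F m' (closedBall (t * I) ρ'))
    (ha : a ∈ ball (s * I) (ρ / 7)) (hb : b ∈ ball (t * I) (ρ' / 7))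
    (hb_far : b ∉ closedBall (s * I) ρ) (ha_far : a ∉ closedBall (t * I) ρ') :
    (F a).im < (F b).im := by
  have hρ : 0 < ρ := by linarith [pos_of_mem_ball ha]
  have hρ' : 0 < ρ' := by linarith [pos_of_mem_ball hb]
  have loss_a := hs_approx.abs_im_sub_le hm.le (mem_closedBall_self hρ.le)
    (ball_subset_closedBall.trans (closedBall_subset_closedBall (by linarith)) ha)
  have loss_b := ht_approx.abs_im_sub_le hm'.le (mem_closedBall_self hρ'.le)
    (ball_subset_closedBall.trans (closedBall_subset_closedBall (by linarith)) hb)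
  rw [mem_ball] at ha hb
  rw [mem_closedBall, not_le] at ha_far hb_far
  have hdist : dist ((t : ℂ) * I) (s * I) = t - s := by
    rw [dist_ofReal_mul_I, abs_of_nonneg (sub_nonneg.2 hst)]
  have hsep : 3 / 7 * ρ + 3 / 7 * ρ' ≤ t - s := by
    linarith [dist_triangle b (t * I) (s * I), dist_triangle a (s * I) (t * I),
      dist_comm ((s : ℂ) * I) (t * I)]
  have gain_s := hs_approx.sub_le_im_sub_axis (x := s) (y := s + 3 / 7 * ρ)
    (mem_closedBall_self hρ.le) (by
      rw [mem_closedBall, dist_ofReal_mul_I, add_sub_cancel_left, abs_of_pos (by positivity)]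
      linarith) (by linarith)
  have gain_t := ht_approx.sub_le_im_sub_axis (x := t - 3 / 7 * ρ') (y := t)
    (by rw [mem_closedBall, dist_ofReal_mul_I, sub_sub_cancel_left, abs_neg,
      abs_of_pos (by positivity)]; linarith) (mem_closedBall_self hρ'.le) (by linarith)
  have hmono : (F ((s + 3 / 7 * ρ : ℝ) * I)).im ≤ (F ((t - 3 / 7 * ρ' : ℝ) * I)).im :=
    hψ (show s + 3 / 7 * ρ < 0 by linarith) (show t - 3 / 7 * ρ' < 0 by linarith) (by linarith)
  rw [abs_le] at loss_a loss_b
  -- the gain `m / 2 * (3 / 7 * ρ)` on each side equals the loss `3 / 2 * m * (ρ / 7)`;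
  -- strictness comes from `a`, `b` lying in open balls
  linarith [mul_lt_mul_of_pos_left ha hm, mul_lt_mul_of_pos_left hb hm']

theorem injOn_biUnion_ball_of_approxDilationOn {F : ℂ → ℂ} {ρ m : ℝ → ℝ}
    (hψ : MonotoneOn (fun y : ℝ => (F (y * I)).im) (Iio 0)) (hm : ∀ s < 0, 0 < m s)
    (happrox : ∀ s < 0, ApproxDilationOn F (m s) (closedBall (s * I) (ρ s))) :
    InjOn F (⋃ s ∈ Iio (0 : ℝ), ball ((s : ℂ) * I) (ρ s / 7)) := by
  have hsmall : ∀ {s : ℝ} {a : ℂ}, a ∈ ball (s * I) (ρ s / 7) → a ∈ closedBall (s * I) (ρ s) :=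
    fun ha => ball_subset_closedBall.trans
      (closedBall_subset_closedBall (by linarith [pos_of_mem_ball ha])) ha
  have key : ∀ s t : ℝ, ∀ a b : ℂ, s ≤ t → t < 0 → a ∈ ball (s * I) (ρ s / 7) →
      b ∈ ball (t * I) (ρ t / 7) → F a = F b → a = b := by
    intro s t a b hst ht ha hb hab
    have hs := hst.trans_lt ht
    by_cases hb_near : b ∈ closedBall (s * I) (ρ s)
    · exact (happrox s hs).injOn (hm s hs) (hsmall ha) hb_near hab
    by_cases ha_near : a ∈ closedBall (t * I) (ρ t)
    · exact (happrox t ht).injOn (hm t ht) ha_near (hsmall hb) hab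
    exact absurd (congrArg im hab) (im_lt_im_of_far_apart hψ hst ht (hm s hs) (hm t ht)
      (happrox s hs) (happrox t ht) ha hb hb_near ha_near).ne
  intro a ha b hb hab
  obtain ⟨s, hs, ha⟩ := mem_iUnion₂.mp ha
  obtain ⟨t, ht, hb⟩ := mem_iUnion₂.mp hb
  rcases le_total s t with hst | hts
  · exact key s t a b hst ht ha hb hab
  · exact (key t s b a hts hs hb ha hab.symm).symm

theorem univalent_near_negative_imaginary_axis_general (F : ℂ → ℂ) (U : Set ℂ)
    (hU : IsOpen U) (haxis : ∀ y : ℝ, y < 0 → (y : ℂ) * Complex.I ∈ U)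
    (hF : DifferentiableOn ℂ F U)
    (hderiv_real : ∀ y : ℝ, y < 0 → (deriv F ((y : ℂ) * Complex.I)).im = 0)
    (hderiv_pos : ∀ y : ℝ, y < 0 → 0 < (deriv F ((y : ℂ) * Complex.I)).re) :
    ∃ V : Set ℂ, IsOpen V ∧ V ⊆ U ∧ (∀ y : ℝ, y < 0 → (y : ℂ) * Complex.I ∈ V) ∧
      Set.InjOn F V := by
  have hψ : MonotoneOn (fun y : ℝ => (F (y * I)).im) (Iio 0) :=
    monotoneOn_im_comp_ofReal_mul_I (convex_Iio 0)
      (fun y hy => hF.differentiableAt (hU.mem_nhds (haxis y hy)))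
      fun y hy => (hderiv_pos y hy).le
  have hdisc : ∀ s : ℝ, s < 0 → ∃ ρ > 0, closedBall (s * I) ρ ⊆ U ∧
      ApproxDilationOn F (deriv F (s * I)).re (closedBall (s * I) ρ) := fun s hs =>
    exists_closedBall_approxDilationOn hU hF (haxis s hs) (hderiv_pos s hs)
      (Complex.ext (by simp) (by simpa using hderiv_real s hs))
  choose! ρ hρ hsub happrox using hdisc
  refine ⟨⋃ s ∈ Iio (0 : ℝ), ball ((s : ℂ) * I) (ρ s / 7),
    isOpen_biUnion fun _ _ => isOpen_ball, iUnion₂_subset fun s hs => ?_,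
    fun y hy => mem_biUnion hy (mem_ball_self ?_),
    injOn_biUnion_ball_of_approxDilationOn (m := fun s => (deriv F (s * I)).re) hψ hderiv_pos
      happrox⟩
  · exact (ball_subset_closedBall.trans
      (closedBall_subset_closedBall (by linarith [hρ s hs]))).trans (hsub s hs)
  · linarith [hρ y hy]

/-- Noshiro–Warschawski-type univalence near the negative imaginary axis:
if `F` is holomorphic on an open `U ⊇ i(-∞,0)`, is purely imaginary with real
nonvanishing derivative on `i(-∞,0)`, `F'` has no zeros on `U`, and
`F'(iy) > 0` for all `y < 0`, then `F` is injective on some open neighborhood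
of `i(-∞,0)` contained in `U`. -/
theorem univalent_near_negative_imaginary_axis (F : ℂ → ℂ) (U : Set ℂ)
    (hU : IsOpen U) (haxis : ∀ y : ℝ, y < 0 → (y : ℂ) * Complex.I ∈ U)
    (hF : DifferentiableOn ℂ F U)
    (himag : ∀ y : ℝ, y < 0 → (F ((y : ℂ) * Complex.I)).re = 0)
    (hderiv_real : ∀ y : ℝ, y < 0 → (deriv F ((y : ℂ) * Complex.I)).im = 0)
    (hderiv_ne : ∀ z ∈ U, deriv F z ≠ 0)
    (hderiv_pos : ∀ y : ℝ, y < 0 → 0 < (deriv F ((y : ℂ) * Complex.I)).re) :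
    ∃ V : Set ℂ, IsOpen V ∧ V ⊆ U ∧ (∀ y : ℝ, y < 0 → (y : ℂ) * Complex.I ∈ V) ∧
      Set.InjOn F V :=
  univalent_near_negative_imaginary_axis_general F U hU haxis hF hderiv_real hderiv_pos
end
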